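/- arXiv:1302.3162 — 4 statements merged into one kernel-verified Lean document; each statement's English description precedes it below -/
import Mathlib

section
/- Let H be a real Hilbert space, let x : ℝ → H be continuously differentiable, let α : ℝ → ℝ be differentiable with α'(t) = −‖x'(t)‖² for all t, and let κ > 0 and s₀ ∈ ℝ. Assume α(t) > 0 and ‖x'(t)‖² ≥ κ·α(t) for all t ≥ s₀, that x(t) converges to a point x⁺ ∈ H as t → ∞, and that α(t) → 0 as t → ∞. Then for every s ≥ s₀ one has ‖x⁺ − x(s)‖ ≤ (2/√κ)·√(α(s)). -/
/-!
Set `φ = (2/√κ)·√α`. Then `φ' = α'/(√κ √α) = -‖x'‖²/(√κ √α)`, and the action-energy inequality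
`√κ √α ≤ ‖x'‖` turns this into `‖x'‖ ≤ -φ'`. Hence the length of `x` on `[s, b]`, which bounds
`‖x b - x s‖`, is at most `φ s - φ b`; letting `b → ∞` gives `‖x⁺ - x s‖ ≤ φ s`.
-/

open Filter Set Topology

section LengthBound

variable {E : Type*} [NormedAddCommGroup E] [NormedSpace ℝ E]
  {f f' : ℝ → E} {φ φ' : ℝ → ℝ} {a b : ℝ}

theorem norm_sub_le_sub_of_norm_deriv_le_neg_deriv (hab : a ≤ b)
    (hf : ∀ t ≥ a, HasDerivAt f (f' t) t) (hφ : ∀ t ≥ a, HasDerivAt φ (φ' t) t)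
    (hle : ∀ t ≥ a, ‖f' t‖ ≤ -φ' t) :
    ‖f b - f a‖ ≤ φ a - φ b := by
  have hf' : ∀ t ∈ Icc a b, HasDerivAt (fun u => f u - f a) (f' t) t :=
    fun t ht => (hf t ht.1).sub_const (f a)
  have hφ' : ∀ t ∈ Icc a b, HasDerivAt (fun u => φ a - φ u) (-φ' t) t :=
    fun t ht => (hφ t ht.1).const_sub (φ a)
  refine image_norm_le_of_norm_deriv_right_le_deriv_boundary' (f := fun u => f u - f a)
    (fun t ht => (hf' t ht).continuousAt.continuousWithinAt) (fun t ht => ?_)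
    (by simp) (fun t ht => (hφ' t ht).continuousAt.continuousWithinAt) (fun t ht => ?_)
    (fun t ht => hle t ht.1) (right_mem_Icc.mpr hab)
  · exact (hf' t (Ico_subset_Icc_self ht)).hasDerivWithinAt
  · exact (hφ' t (Ico_subset_Icc_self ht)).hasDerivWithinAt

theorem norm_sub_le_sub_of_norm_deriv_le_neg_deriv_of_tendsto {L : E} {m : ℝ}
    (hf : ∀ t ≥ a, HasDerivAt f (f' t) t) (hφ : ∀ t ≥ a, HasDerivAt φ (φ' t) t)
    (hle : ∀ t ≥ a, ‖f' t‖ ≤ -φ' t)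
    (hfL : Tendsto f atTop (𝓝 L)) (hφm : Tendsto φ atTop (𝓝 m)) :
    ‖L - f a‖ ≤ φ a - m :=
  le_of_tendsto_of_tendsto ((hfL.sub_const (f a)).norm) (hφm.const_sub (φ a))
    ((eventually_ge_atTop a).mono fun _ hb =>
      norm_sub_le_sub_of_norm_deriv_le_neg_deriv hb hf hφ hle)

end LengthBound

theorem le_two_div_sqrt_mul_sq_div_two_mul_sqrt {κ a v : ℝ} (hκ : 0 < κ) (ha : 0 < a)
    (hv : 0 ≤ v) (h : κ * a ≤ v ^ 2) :
    v ≤ 2 / √κ * (v ^ 2 / (2 * √a)) := by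
  have hκa : 0 < √κ * √a := mul_pos (Real.sqrt_pos.mpr hκ) (Real.sqrt_pos.mpr ha)
  have hsqrt : √κ * √a ≤ v := by
    rw [← Real.sqrt_mul hκ.le, ← Real.sqrt_sq hv]
    exact Real.sqrt_le_sqrt h
  calc v = v * (√κ * √a) / (√κ * √a) := by field_simp
    _ ≤ v * v / (√κ * √a) := by gcongr
    _ = 2 / √κ * (v ^ 2 / (2 * √a)) := by field_simp

theorem distance_bound_by_sqrt_action_general
    {H : Type*} [NormedAddCommGroup H] [InnerProductSpace ℝ H]
    (x : ℝ → H) (hx : ContDiff ℝ 1 x)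
    (α : ℝ → ℝ) (hα : Differentiable ℝ α)
    (hα' : ∀ t, deriv α t = -‖deriv x t‖ ^ 2)
    (κ : ℝ) (hκ : 0 < κ) (s₀ : ℝ)
    (hpos : ∀ t ≥ s₀, 0 < α t)
    (hae : ∀ t ≥ s₀, κ * α t ≤ ‖deriv x t‖ ^ 2)
    (xplus : H) (hconv : Tendsto x atTop (nhds xplus))
    (hα0 : Tendsto α atTop (nhds 0)) :
    ∀ s ≥ s₀, ‖xplus - x s‖ ≤ (2 / Real.sqrt κ) * Real.sqrt (α s) := by
  intro s hs
  have hx' : ∀ t ≥ s, HasDerivAt x (deriv x t) t :=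
    fun t _ => (hx.differentiable one_ne_zero t).hasDerivAt
  have hφ' : ∀ t ≥ s, HasDerivAt (fun u => 2 / √κ * √(α u))
      (2 / √κ * (deriv α t / (2 * √(α t)))) t :=
    fun t ht => ((hα t).hasDerivAt.sqrt (hpos t (hs.trans ht)).ne').const_mul _
  have hle : ∀ t ≥ s, ‖deriv x t‖ ≤ -(2 / √κ * (deriv α t / (2 * √(α t)))) := by
    intro t ht
    rw [hα', neg_div, mul_neg, neg_neg]
    exact le_two_div_sqrt_mul_sq_div_two_mul_sqrt hκ (hpos t (hs.trans ht)) (norm_nonneg _)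
      (hae t (hs.trans ht))
  have hφ0 : Tendsto (fun u => 2 / √κ * √(α u)) atTop (𝓝 0) := by
    simpa using hα0.sqrt.const_mul (2 / √κ)
  simpa using norm_sub_le_sub_of_norm_deriv_le_neg_deriv_of_tendsto hx' hφ' hle hconv hφ0

/-- Along a curve with `α' = −‖x'‖²` and `‖x'‖² ≥ κ α`, the distance to the
asymptotic limit is bounded by `(2/√κ)·√(α(s))`. -/
theorem distance_bound_by_sqrt_action
    {H : Type*} [NormedAddCommGroup H] [InnerProductSpace ℝ H] [CompleteSpace H]
    (x : ℝ → H) (hx : ContDiff ℝ 1 x)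
    (α : ℝ → ℝ) (hα : Differentiable ℝ α)
    (hα' : ∀ t, deriv α t = -‖deriv x t‖ ^ 2)
    (κ : ℝ) (hκ : 0 < κ) (s₀ : ℝ)
    (hpos : ∀ t ≥ s₀, 0 < α t)
    (hae : ∀ t ≥ s₀, κ * α t ≤ ‖deriv x t‖ ^ 2)
    (xplus : H) (hconv : Tendsto x atTop (nhds xplus))
    (hα0 : Tendsto α atTop (nhds 0)) :
    ∀ s ≥ s₀, ‖xplus - x s‖ ≤ (2 / Real.sqrt κ) * Real.sqrt (α s) :=
  distance_bound_by_sqrt_action_general x hx α hα hα' κ hκ s₀ hpos hae xplus hconv hα0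
end

section
/- Let H be a real Hilbert space, let x : ℝ → H be continuously differentiable, let α : ℝ → ℝ be differentiable with α'(t) = −‖x'(t)‖² for all t, and let κ > 0 and s₀ ∈ ℝ. Assume α(t) > 0 and ‖x'(t)‖² ≥ κ·α(t) for all t ≥ s₀, that x(t) converges to a point x⁺ ∈ H as t → ∞, and that α(t) → 0 as t → ∞. Then for every s ≥ s₀ one has ‖x⁺ − x(s)‖ ≤ (2/√κ)·√(α(s₀))·e^(−(κ/2)(s−s₀)). -/
/-!
Since `α' = -‖x'‖² ≤ -κ α`, the function `α(t) e^{κ (t - s₀)}` is antitone, so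
`α(s) ≤ α(s₀) e^{-κ (s - s₀)}`. Moreover `(2 √α / √κ)' = -‖x'‖² / √(κ α) ≤ -‖x'‖`, so the
distance `x` travels on `[s, T]` is at most `2 (√α(s) - √α(T)) / √κ`; letting `T → ∞` gives
`‖x⁺ - x(s)‖ ≤ 2 √α(s) / √κ`, and the decay of `α` finishes the proof.
-/

open Filter Real Set Topology

theorem le_mul_exp_neg_of_hasDerivAt_le {f f' : ℝ → ℝ} {κ a s : ℝ}
    (hf : ∀ t ≥ a, HasDerivAt f (f' t) t) (hf' : ∀ t ≥ a, f' t ≤ -κ * f t) (hs : a ≤ s) :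
    f s ≤ f a * exp (-κ * (s - a)) := by
  set g : ℝ → ℝ := fun t ↦ f t * exp (κ * (t - a))
  have hg : ∀ t ≥ a, HasDerivAt g ((f' t + κ * f t) * exp (κ * (t - a))) t := fun t ht ↦ by
    refine ((hf t ht).mul (((hasDerivAt_id t).sub_const a).const_mul κ).exp).congr_deriv ?_
    simp only [id]
    ring
  have hanti : AntitoneOn g (Ici a) := by
    refine antitoneOn_of_hasDerivWithinAt_nonpos (convex_Ici a)
      (continuousOn_of_forall_continuousAt fun t ht ↦ (hg t ht).continuousAt)
      (fun t ht ↦ (hg t (interior_subset ht)).hasDerivWithinAt) fun t ht ↦ ?_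
    have ht : a ≤ t := interior_subset ht
    exact mul_nonpos_of_nonpos_of_nonneg (by linarith [hf' t ht]) (exp_pos _).le
  have hgs : g s ≤ f a := by simpa [g] using hanti self_mem_Ici hs hs
  calc f s = g s * exp (-κ * (s - a)) := by
        simp only [g, mul_assoc, ← exp_add, neg_mul, add_neg_cancel, exp_zero, mul_one]
    _ ≤ f a * exp (-κ * (s - a)) := by gcongr

theorem norm_sub_le_of_norm_hasDerivAt_le_neg {E : Type*} [NormedAddCommGroup E]
    [NormedSpace ℝ E] {f f' : ℝ → E} {g g' : ℝ → ℝ} {a b : ℝ} (hab : a ≤ b)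
    (hf : ∀ t ∈ Icc a b, HasDerivAt f (f' t) t) (hg : ∀ t ∈ Icc a b, HasDerivAt g (g' t) t)
    (hle : ∀ t ∈ Ico a b, ‖f' t‖ ≤ -g' t) :
    ‖f b - f a‖ ≤ g a - g b := by
  refine image_norm_le_of_norm_deriv_right_le_deriv_boundary' (f := fun t ↦ f t - f a)
    (B := fun t ↦ g a - g t)
    (continuousOn_of_forall_continuousAt fun t ht ↦ ((hf t ht).sub_const _).continuousAt)
    (fun t ht ↦ ((hf t (Ico_subset_Icc_self ht)).sub_const _).hasDerivWithinAt) (by simp)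
    (continuousOn_of_forall_continuousAt fun t ht ↦ ((hg t ht).const_sub _).continuousAt)
    (fun t ht ↦ ((hg t (Ico_subset_Icc_self ht)).const_sub _).hasDerivWithinAt) hle
    (right_mem_Icc.2 hab)

theorem norm_sub_le_of_norm_hasDerivAt_le_neg_of_tendsto {E : Type*} [NormedAddCommGroup E]
    [NormedSpace ℝ E] {f f' : ℝ → E} {g g' : ℝ → ℝ} {a m : ℝ} {L : E}
    (hf : ∀ t ≥ a, HasDerivAt f (f' t) t) (hg : ∀ t ≥ a, HasDerivAt g (g' t) t)
    (hle : ∀ t ≥ a, ‖f' t‖ ≤ -g' t) (hfL : Tendsto f atTop (𝓝 L))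
    (hgm : Tendsto g atTop (𝓝 m)) :
    ‖L - f a‖ ≤ g a - m := by
  refine le_of_tendsto_of_tendsto ((hfL.sub_const _).norm) (hgm.const_sub _) ?_
  filter_upwards [eventually_ge_atTop a] with b hab
  exact norm_sub_le_of_norm_hasDerivAt_le_neg hab (fun t ht ↦ hf t ht.1)
    (fun t ht ↦ hg t ht.1) fun t ht ↦ hle t ht.1

theorem le_sq_div_sqrt_mul_sqrt {n κ a : ℝ} (hn : 0 ≤ n) (hκ : 0 < κ) (ha : 0 < a)
    (h : κ * a ≤ n ^ 2) : n ≤ n ^ 2 / (√κ * √a) := by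
  have hd : 0 < √κ * √a := by positivity
  have hdn : √κ * √a ≤ n := by
    rw [← sqrt_mul hκ.le, ← sqrt_sq hn]
    exact sqrt_le_sqrt h
  rw [le_div_iff₀ hd, sq]
  exact mul_le_mul_of_nonneg_left hdn hn

theorem exponential_decay_level_zero_general
    {H : Type*} [NormedAddCommGroup H] [InnerProductSpace ℝ H]
    (x : ℝ → H) (hx : ContDiff ℝ 1 x)
    (α : ℝ → ℝ) (hα : Differentiable ℝ α)
    (hα' : ∀ t, deriv α t = -‖deriv x t‖ ^ 2)
    (κ : ℝ) (hκ : 0 < κ) (s₀ : ℝ)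
    (hpos : ∀ t ≥ s₀, 0 < α t)
    (hae : ∀ t ≥ s₀, κ * α t ≤ ‖deriv x t‖ ^ 2)
    (xplus : H) (hconv : Tendsto x atTop (nhds xplus))
    (hα0 : Tendsto α atTop (nhds 0)) :
    ∀ s ≥ s₀, ‖xplus - x s‖ ≤
      (2 / Real.sqrt κ) * Real.sqrt (α s₀) * Real.exp (-(κ / 2) * (s - s₀)) := by
  intro s hs
  have hαd (t : ℝ) : HasDerivAt α (-‖deriv x t‖ ^ 2) t := hα' t ▸ (hα t).hasDerivAt
  have hdecay : α s ≤ α s₀ * exp (-κ * (s - s₀)) :=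
    le_mul_exp_neg_of_hasDerivAt_le (fun t _ ↦ hαd t) (fun t ht ↦ by linarith [hae t ht]) hs
  have hdist : ‖xplus - x s‖ ≤ 2 / √κ * √(α s) := by
    have hlim : Tendsto (fun t ↦ 2 / √κ * √(α t)) atTop (𝓝 0) := by
      simpa using hα0.sqrt.const_mul (2 / √κ)
    simpa using norm_sub_le_of_norm_hasDerivAt_le_neg_of_tendsto
      (fun t _ ↦ ((hx.differentiable one_ne_zero) t).hasDerivAt)
      (fun t ht ↦ ((hαd t).sqrt (hpos t (hs.trans ht)).ne').const_mul (2 / √κ))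
      (fun t ht ↦ by
        have hspeed := le_sq_div_sqrt_mul_sqrt (norm_nonneg _) hκ (hpos t (hs.trans ht))
          (hae t (hs.trans ht))
        convert hspeed using 1
        field_simp)
      hconv hlim
  calc ‖xplus - x s‖ ≤ 2 / √κ * √(α s) := hdist
    _ ≤ 2 / √κ * √(α s₀ * exp (-κ * (s - s₀))) := by gcongr
    _ = 2 / √κ * √(α s₀) * exp (-(κ / 2) * (s - s₀)) := by
      rw [sqrt_mul (hpos s₀ le_rfl).le, ← exp_half]
      ring_nf

/-- Level-zero exponential decay: under the action-energy inequality
`‖x'‖² ≥ κ α` and `α' = −‖x'‖²`, the curve converges exponentially fast to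
its asymptotic limit with rate `κ/2`. -/
theorem exponential_decay_level_zero
    {H : Type*} [NormedAddCommGroup H] [InnerProductSpace ℝ H] [CompleteSpace H]
    (x : ℝ → H) (hx : ContDiff ℝ 1 x)
    (α : ℝ → ℝ) (hα : Differentiable ℝ α)
    (hα' : ∀ t, deriv α t = -‖deriv x t‖ ^ 2)
    (κ : ℝ) (hκ : 0 < κ) (s₀ : ℝ)
    (hpos : ∀ t ≥ s₀, 0 < α t)
    (hae : ∀ t ≥ s₀, κ * α t ≤ ‖deriv x t‖ ^ 2)
    (xplus : H) (hconv : Tendsto x atTop (nhds xplus))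
    (hα0 : Tendsto α atTop (nhds 0)) :
    ∀ s ≥ s₀, ‖xplus - x s‖ ≤
      (2 / Real.sqrt κ) * Real.sqrt (α s₀) * Real.exp (-(κ / 2) * (s - s₀)) :=
  exponential_decay_level_zero_general x hx α hα hα' κ hκ s₀ hpos hae xplus hconv hα0
end

section
/- Let n ≥ 1 be a natural number and let c < 0 be a real constant. Define x : ℝ → ℝ by x(s) = 1/(c·e^(2ns) − (3/2)·n²). Then x is well-defined and differentiable on all of ℝ and satisfies the Bernoulli differential equation x'(s) = −2n·x(s) − 3n³·x(s)² for every s ∈ ℝ. Moreover x(s) → 0 as s → +∞ and x(s) → −2/(3n²) as s → −∞, with the exponential bounds |x(s)| ≤ (1/|c|)·e^(−2ns) and |x(s) + 2/(3n²)| ≤ (4|c|/(9n⁴))·e^(2ns) for all s ∈ ℝ. -/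
open Filter

/-!
The denominator `d(s) = c e^{ks} - b` is negative for `c < 0 < b`, so `x = 1/d` is smooth, and since
`d' = k (d + b)` the quotient rule gives `x' = -k x - k b x²`; with `k = 2n`, `b = 3n²/2` this is the
equation of the theorem. As `e^{ks}` runs from `0` to `∞`, `d` runs from `-b` to `-∞`, which gives the
two limits. The bounds follow from `|d| ≥ |c| e^{ks}` and `|d| ≥ b` together with
`1/d + 1/b = c e^{ks} / (b d)`.
-/

namespace BernoulliHeteroclinic

open Real

noncomputable def sol (c k b : ℝ) (s : ℝ) : ℝ := 1 / (c * exp (k * s) - b)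

lemma sol_eq_inv (c k b : ℝ) : sol c k b = (fun s => c * exp (k * s) - b)⁻¹ := by
  ext s; exact one_div _

variable {c b : ℝ}

lemma mul_exp_sub_neg (hc : c ≤ 0) (hb : 0 < b) (k s : ℝ) : c * exp (k * s) - b < 0 := by
  nlinarith [mul_nonpos_of_nonpos_of_nonneg hc (exp_pos (k * s)).le]

lemma hasDerivAt_sol (k s : ℝ) (hd : c * exp (k * s) - b ≠ 0) :
    HasDerivAt (sol c k b) (-k * sol c k b s - k * b * sol c k b s ^ 2) s := by
  have hden : HasDerivAt (fun t => c * exp (k * t) - b) (c * (exp (k * s) * k)) s := by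
    simpa using (((hasDerivAt_id s).const_mul k).exp.const_mul c).sub_const b
  refine (sol_eq_inv c k b ▸ hden.inv hd).congr_deriv ?_
  simp only [sol]
  field_simp
  ring

lemma tendsto_sol_atTop (hc : c < 0) {k : ℝ} (hk : 0 < k) :
    Tendsto (sol c k b) atTop (nhds 0) := by
  have hexp : Tendsto (fun s => exp (k * s)) atTop atTop :=
    tendsto_exp_atTop.comp (tendsto_id.const_mul_atTop hk)
  have hden : Tendsto (fun s => c * exp (k * s) - b) atTop atBot :=
    tendsto_atBot_add_const_right _ (-b) (hexp.const_mul_atTop_of_neg hc)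
  rw [sol_eq_inv]
  exact hden.inv_tendsto_atBot

lemma tendsto_sol_atBot (hb : b ≠ 0) {k : ℝ} (hk : 0 < k) :
    Tendsto (sol c k b) atBot (nhds (-(1 / b))) := by
  have hexp : Tendsto (fun s => exp (k * s)) atBot (nhds 0) :=
    tendsto_exp_atBot.comp (tendsto_id.const_mul_atBot hk)
  have hden := ((hexp.const_mul c).sub_const b).inv₀ (by simpa using hb)
  rw [mul_zero, zero_sub, inv_neg, ← one_div] at hden
  rw [sol_eq_inv]
  exact hden

lemma abs_sol_le (hc : c < 0) (hb : 0 ≤ b) (k s : ℝ) :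
    |sol c k b s| ≤ 1 / |c| * exp (-(k * s)) := by
  have he := exp_pos (k * s)
  have hce : 0 < -c * exp (k * s) := mul_pos (neg_pos.2 hc) he
  have hd : c * exp (k * s) - b < 0 := by linarith
  calc |sol c k b s| = 1 / -(c * exp (k * s) - b) := by
        rw [sol, abs_div, abs_one, abs_of_neg hd]
    _ ≤ 1 / (-c * exp (k * s)) := one_div_le_one_div_of_le hce (by linarith)
    _ = 1 / |c| * exp (-(k * s)) := by
        rw [abs_of_neg hc, exp_neg]; field_simp

lemma abs_sol_add_inv_le (hc : c ≤ 0) (hb : 0 < b) (k s : ℝ) :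
    |sol c k b s + 1 / b| ≤ |c| / b ^ 2 * exp (k * s) := by
  have he := exp_pos (k * s)
  have hd := mul_exp_sub_neg hc hb k s
  have hsum : sol c k b s + 1 / b = c * exp (k * s) / (b * (c * exp (k * s) - b)) := by
    rw [sol, div_add_div _ _ hd.ne hb.ne']; ring
  rw [hsum, abs_div, abs_mul, abs_mul, abs_of_pos he, abs_of_pos hb, abs_of_neg hd]
  have hbd : b * b ≤ b * -(c * exp (k * s) - b) := by
    nlinarith [mul_nonpos_of_nonpos_of_nonneg hc he.le]
  calc |c| * exp (k * s) / (b * -(c * exp (k * s) - b))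
      ≤ |c| * exp (k * s) / (b * b) := by gcongr
    _ = |c| / b ^ 2 * exp (k * s) := by ring

end BernoulliHeteroclinic

open BernoulliHeteroclinic in
/-- The explicit solution of the Bernoulli ODE `x' = −2n x − 3n³ x²` given by
`x(s) = 1/(c e^{2ns} − (3/2)n²)` with `c < 0` is globally defined, solves the
equation, and converges exponentially fast to `0` at `+∞` and to `−2/(3n²)`
at `−∞`. -/
theorem bernoulli_heteroclinic
    (n : ℕ) (hn : 1 ≤ n) (c : ℝ) (hc : c < 0)
    (x : ℝ → ℝ)
    (hxdef : ∀ s, x s = 1 / (c * Real.exp (2 * n * s) - 3 / 2 * (n : ℝ) ^ 2)) :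
    (∀ s, c * Real.exp (2 * n * s) - 3 / 2 * (n : ℝ) ^ 2 ≠ 0) ∧
    Differentiable ℝ x ∧
    (∀ s, deriv x s = -2 * n * x s - 3 * (n : ℝ) ^ 3 * x s ^ 2) ∧
    Tendsto x atTop (nhds 0) ∧
    Tendsto x atBot (nhds (-2 / (3 * (n : ℝ) ^ 2))) ∧
    (∀ s, |x s| ≤ (1 / |c|) * Real.exp (-2 * n * s)) ∧
    (∀ s, |x s + 2 / (3 * (n : ℝ) ^ 2)| ≤
      (4 * |c| / (9 * (n : ℝ) ^ 4)) * Real.exp (2 * n * s)) := by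
  have hx : x = sol c (2 * n) (3 / 2 * (n : ℝ) ^ 2) := funext hxdef
  subst hx
  have hn0 : (0 : ℝ) < n := by exact_mod_cast hn
  have hb : (0 : ℝ) < 3 / 2 * (n : ℝ) ^ 2 := by positivity
  have hd := fun s => (mul_exp_sub_neg hc.le hb (2 * n) s).ne
  have hderiv := fun s => hasDerivAt_sol (2 * n) s (hd s)
  refine ⟨hd, fun s => (hderiv s).differentiableAt, fun s => ?_, tendsto_sol_atTop hc (by positivity),
    ?_, fun s => ?_, fun s => ?_⟩
  · rw [(hderiv s).deriv]; ring
  · have hlim : -(1 / (3 / 2 * (n : ℝ) ^ 2)) = -2 / (3 * (n : ℝ) ^ 2) := by field_simp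
    exact hlim ▸ tendsto_sol_atBot hb.ne' (by positivity)
  · simpa only [neg_mul] using abs_sol_le hc hb.le (2 * n) s
  · have hinv : 1 / (3 / 2 * (n : ℝ) ^ 2) = 2 / (3 * (n : ℝ) ^ 2) := by field_simp
    have hconst : |c| / (3 / 2 * (n : ℝ) ^ 2) ^ 2 = 4 * |c| / (9 * (n : ℝ) ^ 4) := by
      field_simp; ring
    simpa only [hinv, hconst] using abs_sol_add_inv_le hc.le hb (2 * n) s
end

section
/- Let H be a real normed vector space, let x : ℝ → H be twice continuously differentiable, let T ∈ ℝ and ε > 0, and assume ‖x''(s)‖ ≤ ε for all s ≥ T. Set μ := ‖x'(T)‖. Then ‖x'(t)‖ ≥ μ/2 for every t ∈ [T, T + μ/(2ε)], and consequently ∫_T^(T+μ/(2ε)) ‖x'(s)‖² ds ≥ μ³/(8ε). -/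
open Set

/-! The mean value inequality for `x'` gives `‖x'(t)‖ ≥ ‖x'(T)‖ - ε (t - T)`, which stays above
`‖x'(T)‖ / 2` as long as `t - T ≤ ‖x'(T)‖ / (2ε)`; integrating the square of this lower bound over
the interval gives the second claim. -/

section MeanValue

variable {E : Type*} [NormedAddCommGroup E] [NormedSpace ℝ E]

theorem norm_image_sub_mul_le_norm_of_norm_deriv_le_segment {f f' : ℝ → E} {a b C : ℝ}
    (hf : ∀ s ∈ Icc a b, HasDerivWithinAt f (f' s) (Icc a b) s)
    (bound : ∀ s ∈ Ico a b, ‖f' s‖ ≤ C) :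
    ∀ t ∈ Icc a b, ‖f a‖ - C * (t - a) ≤ ‖f t‖ := by
  intro t ht
  have hmv := norm_image_sub_le_of_norm_deriv_le_segment' hf bound t ht
  have htri := norm_sub_norm_le (f a) (f t)
  rw [norm_sub_rev] at htri
  linarith

theorem half_norm_le_norm_of_norm_deriv_le {f : ℝ → E} (hf : Differentiable ℝ f) {a ε : ℝ}
    (hε : 0 ≤ ε) (bound : ∀ s ≥ a, ‖deriv f s‖ ≤ ε) :
    ∀ t ∈ Icc a (a + ‖f a‖ / (2 * ε)), ‖f a‖ / 2 ≤ ‖f t‖ := by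
  intro t ht
  have hlower := norm_image_sub_mul_le_norm_of_norm_deriv_le_segment
    (fun s _ => (hf s).hasDerivAt.hasDerivWithinAt) (fun s hs => bound s hs.1) t ht
  have hdrift : ε * (t - a) ≤ ‖f a‖ / 2 :=
    calc ε * (t - a) ≤ ε * (‖f a‖ / (2 * ε)) := by
          gcongr
          linarith [ht.2]
      _ = ‖f a‖ / 2 * (ε / ε) := by ring
      _ ≤ ‖f a‖ / 2 := mul_le_of_le_one_right (by positivity) (div_self_le_one ε)
  linarith

end MeanValue

theorem mul_le_intervalIntegral_of_le {g : ℝ → ℝ} {a b c : ℝ} (hab : a ≤ b)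
    (hg : IntervalIntegrable g MeasureTheory.volume a b) (h : ∀ s ∈ Icc a b, c ≤ g s) :
    (b - a) * c ≤ ∫ s in a..b, g s := by
  calc (b - a) * c = ∫ _ in a..b, c := by simp
    _ ≤ ∫ s in a..b, g s := intervalIntegral.integral_mono_on hab intervalIntegrable_const hg h

theorem second_derivative_bound_keeps_speed_general
    {H : Type*} [NormedAddCommGroup H] [NormedSpace ℝ H]
    (x : ℝ → H) (hx : ContDiff ℝ 2 x)
    (T ε : ℝ)
    (hsecond : ∀ s ≥ T, ‖deriv (deriv x) s‖ ≤ ε) :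
    (∀ t ∈ Icc T (T + ‖deriv x T‖ / (2 * ε)),
      ‖deriv x T‖ / 2 ≤ ‖deriv x t‖) ∧
    ‖deriv x T‖ ^ 3 / (8 * ε) ≤
      ∫ s in T..(T + ‖deriv x T‖ / (2 * ε)), ‖deriv x s‖ ^ 2 := by
  have hε : 0 ≤ ε := (norm_nonneg _).trans (hsecond T le_rfl)
  have hx' : ContDiff ℝ 1 (deriv x) := hx.deriv'
  have hspeed := half_norm_le_norm_of_norm_deriv_le (hx'.differentiable one_ne_zero) hε hsecond
  refine ⟨hspeed, ?_⟩
  calc ‖deriv x T‖ ^ 3 / (8 * ε)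
      = (T + ‖deriv x T‖ / (2 * ε) - T) * (‖deriv x T‖ / 2) ^ 2 := by ring
    _ ≤ ∫ s in T..(T + ‖deriv x T‖ / (2 * ε)), ‖deriv x s‖ ^ 2 :=
      mul_le_intervalIntegral_of_le (le_add_of_nonneg_right (by positivity))
        ((hx'.continuous.norm.pow 2).intervalIntegrable _ _)
        fun s hs => pow_le_pow_left₀ (by positivity) (hspeed s hs) 2

/-- A uniform bound `ε` on `‖x''‖` prevents `‖x'‖` from dropping below half
its initial value `μ = ‖x'(T)‖` on `[T, T + μ/(2ε)]`, whence the integral of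
`‖x'‖²` over this interval is at least `μ³/(8ε)`. -/
theorem second_derivative_bound_keeps_speed
    {H : Type*} [NormedAddCommGroup H] [NormedSpace ℝ H]
    (x : ℝ → H) (hx : ContDiff ℝ 2 x)
    (T ε : ℝ) (hε : 0 < ε)
    (hsecond : ∀ s ≥ T, ‖deriv (deriv x) s‖ ≤ ε) :
    (∀ t ∈ Icc T (T + ‖deriv x T‖ / (2 * ε)),
      ‖deriv x T‖ / 2 ≤ ‖deriv x t‖) ∧
    ‖deriv x T‖ ^ 3 / (8 * ε) ≤
      ∫ s in T..(T + ‖deriv x T‖ / (2 * ε)), ‖deriv x s‖ ^ 2 :=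
  second_derivative_bound_keeps_speed_general x hx T ε hsecond
end
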